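/- Let α > 1, c > 0, f(R) := √(1 + 4c/R + c²/R²) and θ₊(R) := (2 + c/R + f(R))/(3α) for R > 0. Then there exist C > 0 and R₀ > 0 such that for all R ≥ R₀, | θ₊(R)² − α⁻²(1 + 2c/R) | ≤ C/R³. -/
import Mathlib


open Filter

noncomputable section

/-- The discriminant factor `f(R) = √(1 + 4c/R + c²/R²)`. -/
def fdisc (c R : ℝ) : ℝ := Real.sqrt (1 + 4*c/R + c^2/R^2)

/-- The critical point `θ₊(R) = (2 + c/R + f(R))/(3α)`. -/
def θplus (α c R : ℝ) : ℝ := (2 + c/R + fdisc c R) / (3*α)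

/-- The critical point `θ₋(R) = (2 + c/R − f(R))/(3α)`. -/
def θminus (α c R : ℝ) : ℝ := (2 + c/R - fdisc c R) / (3*α)

/-- The total energy polynomial `P_{k,R}(θ) = kR³θ(αθ−1)² + σR²(1−θ²)`. -/
def Ptot (α σ k R θ : ℝ) : ℝ := k*R^3*θ*(α*θ - 1)^2 + σ*R^2*(1 - θ^2)

/-- the expansion `θ₊(R)² = α⁻²(1 + 2c/R) + O(1/R³)` as `R → +∞`. -/
theorem thetaplus_sq_expansion (α c : ℝ) (hα : 1 < α) (hc : 0 < c) :
    ∃ C : ℝ, 0 < C ∧ ∃ R₀ : ℝ, 0 < R₀ ∧ ∀ R ≥ R₀,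
      |θplus α c R ^ 2 - (α^2)⁻¹ * (1 + 2*c/R)| ≤ C / R^3 := by
  refine ⟨2*c^3, by positivity, max c 1, lt_of_lt_of_le hc (le_max_left c 1), ?_⟩
  intro R hR
  have hR1 : (1:ℝ) ≤ R := le_trans (le_max_right c 1) hR
  have hRpos : 0 < R := lt_of_lt_of_le one_pos hR1
  set x := c / R with hxdef
  have hx0 : 0 < x := div_pos hc hRpos
  have hx1 : x ≤ 1 := by
    rw [hxdef, div_le_one hRpos]; exact le_trans (le_max_left c 1) hR
  set f := Real.sqrt (1 + 4*x + x^2) with hfdef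
  have hs0 : (0:ℝ) ≤ 1 + 4*x + x^2 := by positivity
  have hf0 : 0 ≤ f := Real.sqrt_nonneg _
  have hf2 : f^2 = 1 + 4*x + x^2 := Real.sq_sqrt hs0
  have hfe : fdisc c R = f := by
    rw [fdisc, hfdef, hxdef, div_pow]; ring_nf
  have hθ : θplus α c R = (2 + x + f) / (3*α) := by
    rw [θplus, hfe, hxdef]
  have key : ((2+x+f)^2 - 9*(1+2*x)) * (2*(2+x)*f + (4+10*x-2*x^2)) = 72*x^3 := by
    linear_combination ((2*(2+x)*f + (4+10*x-2*x^2)) + 4*(2+x)^2) * hf2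
  have hAB : (0:ℝ) < 2*(2+x)*f + (4+10*x-2*x^2) := by nlinarith
  have hAB4 : (4:ℝ) ≤ 2*(2+x)*f + (4+10*x-2*x^2) := by nlinarith
  have hNeq : (2+x+f)^2 - 9*(1+2*x) = 72*x^3 / (2*(2+x)*f + (4+10*x-2*x^2)) := by
    rw [eq_div_iff hAB.ne']; exact key
  have hNpos : 0 < (2+x+f)^2 - 9*(1+2*x) := by
    rw [hNeq]; positivity
  have hNle : (2+x+f)^2 - 9*(1+2*x) ≤ 18*x^3 := by
    rw [hNeq, div_le_iff₀ hAB]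
    nlinarith [mul_le_mul_of_nonneg_left hAB4 (by positivity : (0:ℝ) ≤ 18*x^3)]
  have hα0 : (0:ℝ) < α := by linarith
  have hα2 : (1:ℝ) ≤ α^2 := by nlinarith
  have hdiff : ((2+x+f)/(3*α))^2 - (α^2)⁻¹*(1+2*x) =
      ((2+x+f)^2 - 9*(1+2*x)) / (9*α^2) := by
    field_simp; ring
  have h2cx : 2*c/R = 2*x := by rw [hxdef]; ring
  have hcx3 : 2*c^3 / R^3 = 2*x^3 := by rw [hxdef, div_pow]; ring
  rw [hθ, h2cx, hcx3, hdiff, abs_of_nonneg (le_of_lt (by positivity))]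
  rw [div_le_iff₀ (by positivity : (0:ℝ) < 9*α^2)]
  nlinarith [mul_le_mul_of_nonneg_left hα2 (le_of_lt (by positivity : (0:ℝ) < 18*x^3))]
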